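/- Let X and Y be persistence modules over a field K with bases B_X = {x_1,…,x_N} and B_Y^{old} = {y_1,…,y_N} such that |birth(x_i) − birth(y_i)| < ε and |death(x_i) − death(y_i)| < ε for all i, and such that every interval of X and of Y has length greater than 2ε. Let α : X → Y be an ε-morphism. If Mat_{B_X}^{B_Y^{old}}(α) is a basis transformation matrix for Y with respect to B_Y^{old}, and B_Y^{new} = Mat_{B_X}^{B_Y^{old}}(α)(B_Y^{old}) is the corresponding transformed basis, then Mat_{B_X}^{B_Y^{new}}(α) is the identity matrix. -/

import Mathlib

/-!
Since `|bX i - bY i| < ε` and every interval of `Y` is longer than `2ε`, the height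
`bX i + ε` lies in `[bY i, dY i)`. Because `A` only combines `y_j` born no later than `y_i`,
transporting `y_i^new = Σ_j A j i • y_j` up to `bX i + ε` gives `Σ_j A j i • φ(y_j)`, which is
`α(x_i)` by the definition of `A`.
-/

open scoped BigOperators

universe u v

/-- A persistence module over a field `K`. -/
structure PersistenceModule (K : Type u) [Field K] where
  space : ℝ → Type v
  [instAdd : ∀ t, AddCommGroup (space t)]
  [instMod : ∀ t, Module K (space t)]
  trans : ∀ s t : ℝ, s ≤ t → (space s →ₗ[K] space t)
  trans_self : ∀ (t : ℝ) (h : t ≤ t), trans t t h = LinearMap.id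
  trans_trans : ∀ (r s t : ℝ) (hrs : r ≤ s) (hst : s ≤ t) (x : space r),
      trans s t hst (trans r s hrs x) = trans r t (hrs.trans hst) x

attribute [instance] PersistenceModule.instAdd PersistenceModule.instMod

namespace PersistenceModule

variable {K : Type u} [Field K]

/-- `x ∈ X_t` is born at `t` if it is not in the image of any earlier transition map. -/
def BornAt (X : PersistenceModule K) (t : ℝ) (x : X.space t) : Prop :=
  ∀ (s : ℝ) (h : s < t), x ∉ Set.range (X.trans s t h.le)

/-- The death time of an element `x ∈ X_t`. -/
noncomputable def death (X : PersistenceModule K) (t : ℝ) (x : X.space t) : ℝ :=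
  sInf {s : ℝ | ∃ h : t < s, X.trans t s h.le x = 0}

/-- `x` is a basis of `X` realizing the intervals `[b i, d i)`. -/
def IsBasisFamily {ι : Type*} (X : PersistenceModule K) (b d : ι → ℝ)
    (x : ∀ i, X.space (b i)) : Prop :=
  (∀ i, X.BornAt (b i) (x i)) ∧
  (∀ i, X.death (b i) (x i) = d i) ∧
  (∀ t : ℝ,
    LinearIndependent K
      (fun i : {i : ι // b i ≤ t ∧ t < d i} => X.trans (b i.1) t i.2.1 (x i.1)) ∧
    Submodule.span K (Set.range
      (fun i : {i : ι // b i ≤ t ∧ t < d i} => X.trans (b i.1) t i.2.1 (x i.1))) = ⊤)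

open scoped Classical in
/-- The image of the basis element `x j` at height `h` (or `0` if not yet born). -/
noncomputable def pushTo {ι : Type*} (X : PersistenceModule K) (b : ι → ℝ)
    (x : ∀ i, X.space (b i)) (h : ℝ) (j : ι) : X.space h :=
  if hb : b j ≤ h then X.trans (b j) h hb (x j) else 0

end PersistenceModule

/-- An `ε`-morphism of persistence modules. -/
structure EpsMorphism {K : Type u} [Field K] (X Y : PersistenceModule K) (ε : ℝ) where
  maps : ∀ r r' : ℝ, r + ε = r' → (X.space r →ₗ[K] Y.space r')
  comm : ∀ (s t s' t' : ℝ) (hs : s + ε = s') (ht : t + ε = t') (hst : s ≤ t)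
      (x : X.space s),
    maps t t' ht (X.trans s t hst x) = Y.trans s' t' (by linarith) (maps s s' hs x)

/-- A pair of `ε`-morphisms forming an `ε`-interleaving. -/
def IsInterleaving {K : Type u} [Field K] (X Y : PersistenceModule K) (ε : ℝ)
    (F : EpsMorphism X Y ε) (G : EpsMorphism Y X ε) : Prop :=
  (∀ (r r'' : ℝ) (h : r + ε + ε = r'') (hr : r ≤ r'') (x : X.space r),
      G.maps (r + ε) r'' (by linarith) (F.maps r (r + ε) rfl x) = X.trans r r'' hr x) ∧
  (∀ (r r'' : ℝ) (h : r + ε + ε = r'') (hr : r ≤ r'') (y : Y.space r),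
      F.maps (r + ε) r'' (by linarith) (G.maps r (r + ε) rfl y) = Y.trans r r'' hr y)

/-- `A` is the matrix of the `ε`-morphism `α` with respect to the bases `x` of `X`
(realizing `[bX i, dX i)`) and `y` of `Y` (realizing `[bY j, dY j)`). -/
def IsMatrixOf {K : Type u} [Field K] {X Y : PersistenceModule K} {ε : ℝ}
    {N M : ℕ} (α : EpsMorphism X Y ε)
    (bX dX : Fin N → ℝ) (x : ∀ i, X.space (bX i))
    (bY dY : Fin M → ℝ) (y : ∀ j, Y.space (bY j))
    (A : Matrix (Fin M) (Fin N) K) : Prop :=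
  (∀ i, α.maps (bX i) (bX i + ε) rfl (x i)
      = ∑ j, A j i • Y.pushTo bY y (bX i + ε) j) ∧
  (∀ (j : Fin M) (i : Fin N), ¬ (bY j ≤ bX i + ε ∧ bX i + ε < dY j) → A j i = 0)

/-- A basis transformation matrix. -/
def IsBasisTransformMatrix {K : Type u} [Field K] {N : ℕ} (b d : Fin N → ℝ)
    (A : Matrix (Fin N) (Fin N) K) : Prop :=
  (∀ i, A i i ≠ 0) ∧ ∀ j i, A j i ≠ 0 → b j ≤ b i ∧ d j ≤ d i

/-- The transformed family `A(B)`: `x_i^new = ∑ j A j i • φ(x_j)`. -/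
noncomputable def transformBasis {K : Type u} [Field K] {N : ℕ} (X : PersistenceModule K)
    (b : Fin N → ℝ) (x : ∀ i, X.space (b i)) (A : Matrix (Fin N) (Fin N) K)
    (i : Fin N) : X.space (b i) :=
  ∑ j, A j i • X.pushTo b x (b i) j

/-- The elementary matrix `e_{lk}^μ`: identity with extra entry `μ` in position `(k, l)`. -/
def eMat {K : Type u} [Field K] {N : ℕ} (l k : Fin N) (μ : K) : Matrix (Fin N) (Fin N) K :=
  1 + Matrix.single k l μ

namespace PersistenceModule

variable {K : Type u} [Field K] {ι : Type*} (X : PersistenceModule K) (b : ι → ℝ)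
  (x : ∀ i, X.space (b i))

theorem pushTo_of_le {h : ℝ} {j : ι} (hj : b j ≤ h) :
    X.pushTo b x h j = X.trans (b j) h hj (x j) :=
  dif_pos hj

theorem trans_pushTo {s t : ℝ} (hst : s ≤ t) {j : ι} (hj : b j ≤ s) :
    X.trans s t hst (X.pushTo b x s j) = X.pushTo b x t j := by
  rw [pushTo_of_le X b x hj, pushTo_of_le X b x (hj.trans hst), X.trans_trans]

end PersistenceModule

theorem pushTo_transformBasis {K : Type u} [Field K] {N : ℕ} (X : PersistenceModule K)
    (b : Fin N → ℝ) (x : ∀ i, X.space (b i)) (A : Matrix (Fin N) (Fin N) K)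
    {i : Fin N} (hA : ∀ j, A j i ≠ 0 → b j ≤ b i) {h : ℝ} (hi : b i ≤ h) :
    X.pushTo b (transformBasis X b x A) h i = ∑ j, A j i • X.pushTo b x h j := by
  rw [X.pushTo_of_le b _ hi, transformBasis, map_sum]
  refine Finset.sum_congr rfl fun j _ => ?_
  by_cases hAji : A j i = 0
  · simp [hAji]
  · rw [map_smul, X.trans_pushTo b x hi (hA j hAji)]

theorem isMatrixOf_one {K : Type u} [Field K] {X Y : PersistenceModule K} {ε : ℝ} {N : ℕ}
    (α : EpsMorphism X Y ε) (bX dX : Fin N → ℝ) (x : ∀ i, X.space (bX i))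
    (bY dY : Fin N → ℝ) (y : ∀ j, Y.space (bY j))
    (hmaps : ∀ i, α.maps (bX i) (bX i + ε) rfl (x i) = Y.pushTo bY y (bX i + ε) i)
    (halive : ∀ i, bY i ≤ bX i + ε ∧ bX i + ε < dY i) :
    IsMatrixOf α bX dX x bY dY y (1 : Matrix (Fin N) (Fin N) K) :=
  ⟨fun i => by simp [hmaps i, Matrix.one_apply],
    fun _ _ hji => Matrix.one_apply_ne fun hij => hji (hij ▸ halive _)⟩

theorem statement3_general {K : Type u} [Field K] {N : ℕ}
    (X Y : PersistenceModule K) (ε : ℝ)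
    (bX dX bY dY : Fin N → ℝ)
    (x : ∀ i, X.space (bX i)) (y : ∀ i, Y.space (bY i))
    (hb : ∀ i, |bX i - bY i| < ε)
    (hlenY : ∀ i, 2 * ε < dY i - bY i)
    (α : EpsMorphism X Y ε)
    (A : Matrix (Fin N) (Fin N) K)
    (hA : IsMatrixOf α bX dX x bY dY y A)
    (hAtrans : IsBasisTransformMatrix bY dY A) :
    IsMatrixOf α bX dX x bY dY (transformBasis Y bY y A)
      (1 : Matrix (Fin N) (Fin N) K) := by
  have hborn : ∀ i, bY i ≤ bX i + ε := fun i => by linarith [abs_lt.mp (hb i)]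
  have halive : ∀ i, bX i + ε < dY i := fun i => by linarith [abs_lt.mp (hb i), hlenY i]
  refine isMatrixOf_one α bX dX x bY dY _ (fun i => ?_) fun i => ⟨hborn i, halive i⟩
  rw [hA.1 i, pushTo_transformBasis Y bY y A (fun j hj => (hAtrans.2 j i hj).1) (hborn i)]

/-- If the matrix of an `ε`-morphism `α : X → Y` (with respect to bases whose
births and deaths match within `ε` and all of whose intervals have length `> 2ε`) is a basis
transformation matrix for `Y`, then the matrix of `α` with respect to the transformed basis of
`Y` is the identity. -/
theorem statement3 {K : Type u} [Field K] {N : ℕ}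
    (X Y : PersistenceModule K) (ε : ℝ) (hε : 0 ≤ ε)
    (bX dX bY dY : Fin N → ℝ)
    (x : ∀ i, X.space (bX i)) (y : ∀ i, Y.space (bY i))
    (hbdX : ∀ i, bX i < dX i) (hbdY : ∀ i, bY i < dY i)
    (hdistX : Function.Injective fun i => (bX i, dX i))
    (hdistY : Function.Injective fun i => (bY i, dY i))
    (hX : X.IsBasisFamily bX dX x) (hY : Y.IsBasisFamily bY dY y)
    (hb : ∀ i, |bX i - bY i| < ε) (hd : ∀ i, |dX i - dY i| < ε)
    (hlenX : ∀ i, 2 * ε < dX i - bX i) (hlenY : ∀ i, 2 * ε < dY i - bY i)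
    (α : EpsMorphism X Y ε)
    (A : Matrix (Fin N) (Fin N) K)
    (hA : IsMatrixOf α bX dX x bY dY y A)
    (hAtrans : IsBasisTransformMatrix bY dY A) :
    IsMatrixOf α bX dX x bY dY (transformBasis Y bY y A)
      (1 : Matrix (Fin N) (Fin N) K) :=
  statement3_general X Y ε bX dX bY dY x y hb hlenY α A hA hAtrans
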